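/- arXiv:1110.2205 — 11 statements merged into one kernel-verified Lean document; each statement's English description precedes it below -/
import Mathlib

section
/- Let A be a c-atom and S, U, M', M sets of atoms with S ⊆ U ⊆ M' ⊆ M. If S conditionally satisfies A with respect to M, then U conditionally satisfies A with respect to M'. -/
universe u

/-- An abstract constraint atom (c-atom): a domain and a set of solutions,
each solution being a subset of the domain. -/
structure CAtom (α : Type u) where
  dom : Set α
  sol : Set (Set α)
  sol_sub : ∀ X ∈ sol, X ⊆ dom

variable {α : Type u}

/-- `S ⊨ A` : satisfaction of a c-atom. -/
def CAtom.satBy (A : CAtom α) (S : Set α) : Prop := S ∩ A.dom ∈ A.sol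

/-- `S ⊨_M A` : conditional satisfaction of a c-atom. -/
def CAtom.condSatBy (A : CAtom α) (S M : Set α) : Prop :=
  A.satBy S ∧ ∀ I ⊆ A.dom, S ∩ A.dom ⊆ I → I ⊆ M ∩ A.dom → I ∈ A.sol

/-- A c-atom is monotone if solutions are closed under supersets (within the domain). -/
def CAtom.IsMonotone (A : CAtom α) : Prop :=
  ∀ X Y : Set α, X ⊆ Y → Y ⊆ A.dom → X ∈ A.sol → Y ∈ A.sol

/-- The complement c-atom `Ā = (A_d, 2^{A_d} \ A_c)`. -/
def CAtom.compl (A : CAtom α) : CAtom α :=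
  ⟨A.dom, {X | X ⊆ A.dom ∧ X ∉ A.sol}, fun _ hX => hX.1⟩

/-- The elementary c-atom `({a}, {{a}})`. -/
def elemAtom (a : α) : CAtom α :=
  ⟨{a}, {{a}}, by intro X hX; rw [Set.mem_singleton_iff] at hX; exact hX ▸ subset_rfl⟩

/-- A basic rule: head is an elementary c-atom `({a},{{a}})` (encoded as `some a`)
or the constraint head `⊥` (encoded as `none`); the body consists of positive
c-atoms `pos` and negation-as-failure c-atoms `neg`. -/
structure Rule (α : Type u) where
  head : Option α
  pos : Set (CAtom α)
  neg : Set (CAtom α)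

/-- `M ⊨ body(r)`. -/
def Rule.bodySat (r : Rule α) (M : Set α) : Prop :=
  (∀ A ∈ r.pos, A.satBy M) ∧ (∀ A ∈ r.neg, ¬ A.satBy M)

/-- Satisfaction of a rule head: the elementary head `({a},{{a}})` is satisfied iff
`a ∈ M`; the constraint head `⊥` is never satisfied. -/
def headSat (h : Option α) (M : Set α) : Prop := ∃ a, h = some a ∧ a ∈ M

/-- `M` is a model of `P`. -/
def isModel (P : Set (Rule α)) (M : Set α) : Prop :=
  ∀ r ∈ P, r.bodySat M → headSat r.head M

/-- A program is positive if no rule has naf-atoms. -/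
def isPositive (P : Set (Rule α)) : Prop := ∀ r ∈ P, r.neg = ∅

/-- The immediate consequence operator
`T_P(S,M) = { a | ∃ r ∈ P, head(r) = ({a},{{a}}), S ⊨_M pos(r) }`. -/
def TP (P : Set (Rule α)) (S M : Set α) : Set α :=
  { a | ∃ r ∈ P, r.head = some a ∧ ∀ A ∈ r.pos, A.condSatBy S M }

/-- The iteration `T_P^i(∅, M)`. -/
def TPiter (P : Set (Rule α)) (M : Set α) : ℕ → Set α
  | 0 => ∅
  | n + 1 => TP P (TPiter P M n) M

/-- The limit `T_P^∞(∅, M)`. -/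
def TPinf (P : Set (Rule α)) (M : Set α) : Set α := ⋃ i, TPiter P M i

/-- `M` is an answer set of a (positive) basic program `P`:
`M` is a model of `P` and `M = T_P^∞(∅,M)`. -/
def answerSetPos (P : Set (Rule α)) (M : Set α) : Prop :=
  isModel P M ∧ M = TPinf P M

/-- The reduct `P^M`: delete rules with `not A` in the body such that `M ⊨ A`,
and delete the naf-atoms from the remaining rules. -/
def reduct (P : Set (Rule α)) (M : Set α) : Set (Rule α) :=
  { r' | ∃ r ∈ P, (∀ A ∈ r.neg, ¬ A.satBy M) ∧ r' = ⟨r.head, r.pos, ∅⟩ }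

/-- The complement program `𝒞(P)`: replace each `not A` by the complement c-atom `Ā`. -/
def complProg (P : Set (Rule α)) : Set (Rule α) :=
  { r' | ∃ r ∈ P, r' = ⟨r.head, r.pos ∪ CAtom.compl '' r.neg, ∅⟩ }

/-- `M` is an answer set by reduct of `P` iff `M` is an answer set of `P^M`. -/
def answerSetByReduct (P : Set (Rule α)) (M : Set α) : Prop :=
  answerSetPos (reduct P M) M

/-- `M` is an answer set by complement of `P` iff `M` is an answer set of `𝒞(P)`. -/
def answerSetByCompl (P : Set (Rule α)) (M : Set α) : Prop :=
  answerSetPos (complProg P) M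

/-- `P` is naf-monotone: every c-atom occurring in a naf-atom of `P` is monotone. -/
def nafMonotone (P : Set (Rule α)) : Prop := ∀ r ∈ P, ∀ A ∈ r.neg, A.IsMonotone

/-- `M` is a weakly well-supported model of `P`: `M` is a model and there is a level
mapping `ℓ` (into the positive integers) such that each `b ∈ M` has a rule `r` with
head `({b},{{b}})`, `M ⊨ body(r)`, and for each `A ∈ pos(r)`, `L(A,M)` is defined and
`ℓ(b) > L(A,M)`, i.e. there is a solution `X ∈ A_c`, `X ⊆ M`, `X ⊨_M A` whose
members all have level below `ℓ(b)`. -/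
def weaklyWS (P : Set (Rule α)) (M : Set α) : Prop :=
  isModel P M ∧ ∃ ℓ : α → ℕ, (∀ a ∈ M, 0 < ℓ a) ∧
    ∀ b ∈ M, ∃ r ∈ P, r.head = some b ∧ r.bodySat M ∧
      ∀ A ∈ r.pos, ∃ X ∈ A.sol, X ⊆ M ∧ A.condSatBy X M ∧ ∀ x ∈ X, ℓ x < ℓ b

/-- `M` is a strongly well-supported model of `P`: as weakly well-supported, with
the level condition additionally imposed on the complements of the naf-atoms. -/
def stronglyWS (P : Set (Rule α)) (M : Set α) : Prop :=
  isModel P M ∧ ∃ ℓ : α → ℕ, (∀ a ∈ M, 0 < ℓ a) ∧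
    ∀ b ∈ M, ∃ r ∈ P, r.head = some b ∧ r.bodySat M ∧
      (∀ A ∈ r.pos, ∃ X ∈ A.sol, X ⊆ M ∧ A.condSatBy X M ∧ ∀ x ∈ X, ℓ x < ℓ b) ∧
      (∀ A ∈ r.neg, ∃ X ∈ A.compl.sol, X ⊆ M ∧ A.compl.condSatBy X M ∧
        ∀ x ∈ X, ℓ x < ℓ b)

/-- A normal logic program rule `a ← a₁,…,aₙ, not b₁,…,not bₘ`. -/
structure NRule (α : Type u) where
  head : α
  pos : Set α
  neg : Set α

/-- The Gelfond-Lifschitz reduct `GL(P,M)`. -/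
def GLreduct (P : Set (NRule α)) (M : Set α) : Set (NRule α) :=
  { n | ∃ r ∈ P, r.neg ∩ M = ∅ ∧ n = ⟨r.head, r.pos, ∅⟩ }

/-- The least model of a definite normal program. -/
def leastModel (Q : Set (NRule α)) : Set α :=
  ⋂₀ { S | ∀ r ∈ Q, r.pos ⊆ S → r.head ∈ S }

/-- `M` is a Gelfond-Lifschitz stable model of the normal program `P`. -/
def glStable (P : Set (NRule α)) (M : Set α) : Prop := M = leastModel (GLreduct P M)

/-- The translation `catom(P)`: replace each atom occurrence by its elementary c-atom. -/
def catomProg (P : Set (NRule α)) : Set (Rule α) :=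
  { r' | ∃ r ∈ P, r' = ⟨some r.head, elemAtom '' r.pos, elemAtom '' r.neg⟩ }

/-- A general (positive) rule: a c-atom head and a body of c-atoms. -/
structure GRule (α : Type u) where
  head : CAtom α
  pos : Set (CAtom α)

/-- `M` is a model of a general positive program. -/
def isGModel (P : Set (GRule α)) (M : Set α) : Prop :=
  ∀ r ∈ P, (∀ A ∈ r.pos, A.satBy M) → r.head.satBy M

/-- The instance `inst(P,M)` of a general program w.r.t. `M`. -/
def inst (P : Set (GRule α)) (M : Set α) : Set (Rule α) :=
  { r' | ∃ r ∈ P, M ∩ r.head.dom ∈ r.head.sol ∧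
      ∃ b ∈ M ∩ r.head.dom, r' = ⟨some b, r.pos, ∅⟩ }

/-- The set `P(S)` of rules applicable in `S`. -/
def appl (P : Set (GRule α)) (S : Set α) : Set (GRule α) :=
  { r ∈ P | ∀ A ∈ r.pos, A.satBy S }

/-- The nondeterministic one-step provability operator `T^{nd}_P`. -/
def Tnd (P : Set (GRule α)) (S : Set α) : Set (Set α) :=
  { S' | S' ⊆ (⋃ r ∈ appl P S, r.head.dom) ∧ ∀ r ∈ appl P S, r.head.satBy S' }

/-- `M` is a stable (derivable) model of a general positive program in the sense of
Marek and Truszczyński: `M` is the result of a `P`-computation. -/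
def mtStable (P : Set (GRule α)) (M : Set α) : Prop :=
  ∃ X : ℕ → Set α, X 0 = ∅ ∧ (∀ n, X n ⊆ X (n + 1)) ∧
    (∀ n, X (n + 1) ∈ Tnd P (X n)) ∧ M = ⋃ n, X n

/-- The FLP-reduct: keep exactly the rules whose body is satisfied by `M`. -/
def FLP (P : Set (Rule α)) (M : Set α) : Set (Rule α) := { r ∈ P | r.bodySat M }

/-- The unfolding of a basic positive program into a normal logic program:
each body c-atom `A` is replaced by the positive atoms of one of its solutions
together with the negations of the remaining atoms of its domain. -/
def unfolding (P : Set (Rule α)) : Set (NRule α) :=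
  { n | ∃ r ∈ P, ∃ a, r.head = some a ∧ ∃ f : CAtom α → Set α,
      (∀ A ∈ r.pos, f A ∈ A.sol) ∧
      n = ⟨a, ⋃ A ∈ r.pos, f A, ⋃ A ∈ r.pos, A.dom \ f A⟩ }

/-- If `S ⊆ U ⊆ M' ⊆ M` and `S ⊨_M A`, then `U ⊨_{M'} A`. -/
theorem stmt0 (A : CAtom α) (S U M' M : Set α)
    (hSU : S ⊆ U) (hUM' : U ⊆ M') (hM'M : M' ⊆ M)
    (h : A.condSatBy S M) : A.condSatBy U M' := by
  obtain ⟨hs, hcond⟩ := h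
  have hU : U ∩ A.dom ∈ A.sol :=
    hcond _ Set.inter_subset_right
      (Set.inter_subset_inter_left _ hSU)
      (Set.inter_subset_inter_left _ fun x hx => hM'M (hUM' hx))
  exact ⟨hU, fun I hId hUI hIM' =>
    hcond I hId (fun x hx => hUI ⟨hSU hx.1, hx.2⟩)
      fun x hx => ⟨hM'M (hIM' hx).1, (hIM' hx).2⟩⟩
end

section
/- Let P be a basic positive program and M a model of P. If S ⊆ U ⊆ M, then T_P(S, M) ⊆ T_P(U, M) ⊆ M. -/
universe u

variable {α : Type u}

/-- For a basic positive program `P` and a model `M` of `P`,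
if `S ⊆ U ⊆ M` then `T_P(S,M) ⊆ T_P(U,M) ⊆ M`. -/
theorem stmt2 (P : Set (Rule α)) (M S U : Set α)
    (hP : isPositive P) (hM : isModel P M) (hSU : S ⊆ U) (hUM : U ⊆ M) :
    TP P S M ⊆ TP P U M ∧ TP P U M ⊆ M := by
  constructor
  · rintro a ⟨r, hrP, hhead, hcs⟩
    refine ⟨r, hrP, hhead, fun A hA => ?_⟩
    obtain ⟨hsat, hcond⟩ := hcs A hA
    have hUsat : A.satBy U := by
      apply hcond (U ∩ A.dom) Set.inter_subset_right
      · exact Set.inter_subset_inter_left _ hSU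
      · exact Set.inter_subset_inter_left _ hUM
    exact ⟨hUsat, fun I hId hSI hIM => hcond I hId
      (Set.Subset.trans (Set.inter_subset_inter_left _ hSU) hSI) hIM⟩
  · rintro a ⟨r, hrP, hhead, hcs⟩
    have hbody : r.bodySat M := by
      refine ⟨fun A hA => ?_, fun A hA => ?_⟩
      · obtain ⟨hsat, hcond⟩ := hcs A hA
        exact hcond (M ∩ A.dom) Set.inter_subset_right
          (Set.inter_subset_inter_left _ hUM) le_rfl
      · rw [hP r hrP] at hA; exact absurd hA (Set.notMem_empty A)
    obtain ⟨b, hb, hbM⟩ := hM r hrP hbody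
    rw [hhead] at hb; cases Option.some.inj hb; exact hbM
end

section
/- Every answer set of a basic positive program P is a minimal model of P: if M = T_P^∞(∅,M) and M is a model of P, then no proper subset of M is a model of P. -/
universe u

variable {α : Type u}

/-- Every answer set of a basic positive program is a minimal model:
if `M` is a model of `P` and `M = T_P^∞(∅,M)`, then no proper subset of `M` is a model. -/
theorem stmt4 (P : Set (Rule α)) (M : Set α) (hP : isPositive P)
    (hM : isModel P M) (hfix : M = TPinf P M) :
    ¬ ∃ N, N ⊂ M ∧ isModel P N := by
  rintro ⟨N, hNM, hN⟩
  have key : ∀ i, TPiter P M i ⊆ N := by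
    intro i
    induction i with
    | zero => simp [TPiter]
    | succ n ih =>
        intro a ha
        obtain ⟨r, hrP, hhead, hcond⟩ := ha
        have hbody : r.bodySat N := by
          constructor
          · intro A hA
            obtain ⟨hsat, hcl⟩ := hcond A hA
            have : N ∩ A.dom ∈ A.sol := by
              apply hcl (N ∩ A.dom) (Set.inter_subset_right)
              · exact Set.inter_subset_inter_left _ ih
              · exact Set.inter_subset_inter_left _ hNM.1
            exact this
          · intro A hA
            rw [hP r hrP] at hA
            exact absurd hA (Set.notMem_empty A)
        obtain ⟨b, hb, hbN⟩ := hN r hrP hbody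
        rw [hhead] at hb
        injection hb with hb
        exact hb ▸ hbN
  have hMN : M ⊆ N := by
    rw [hfix]
    exact Set.iUnion_subset key
  exact hNM.2 hMN
end

section
/- Let P be a basic program (rules may contain negation-as-failure c-atoms). Every answer set by complement of P is an answer set by reduct of P. -/
universe u

variable {α : Type u}

section Aux
variable {α : Type u}

lemma condSat_mono (A : CAtom α) {S S' M : Set α} (h : A.condSatBy S M)
    (h1 : S ⊆ S') (h2 : S' ⊆ M) : A.condSatBy S' M := by
  constructor
  · exact h.2 (S' ∩ A.dom) Set.inter_subset_right
      (Set.inter_subset_inter_left _ h1) (Set.inter_subset_inter_left _ h2)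
  · intro I hI h3 h4
    exact h.2 I hI ((Set.inter_subset_inter_left _ h1).trans h3) h4

lemma condSat_top (A : CAtom α) {S M : Set α} (h : A.condSatBy S M)
    (h1 : S ⊆ M) : A.satBy M := by
  exact h.2 (M ∩ A.dom) Set.inter_subset_right
    (Set.inter_subset_inter_left _ h1) subset_rfl

lemma model_reduct {P : Set (Rule α)} {M : Set α}
    (hm : isModel (complProg P) M) : isModel (reduct P M) M := by
  rintro r' ⟨r, hr, hneg, rfl⟩ hbody
  have : Rule.bodySat ⟨r.head, r.pos ∪ CAtom.compl '' r.neg, ∅⟩ M := by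
    constructor
    · rintro A (hA | ⟨B, hB, rfl⟩)
      · exact hbody.1 A hA
      · exact ⟨Set.inter_subset_right, hneg B hB⟩
    · simp
  exact hm ⟨r.head, r.pos ∪ CAtom.compl '' r.neg, ∅⟩ ⟨r, hr, rfl⟩ this

lemma iter_sub_M {P : Set (Rule α)} {M : Set α}
    (hm : isModel (reduct P M) M) : ∀ n, TPiter (reduct P M) M n ⊆ M := by
  intro n
  induction n with
  | zero => simp [TPiter]
  | succ n ih =>
    rintro a ⟨r', hr', hhead, hcond⟩
    have hbody : r'.bodySat M := by
      constructor
      · intro A hA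
        exact condSat_top A (hcond A hA) ih
      · obtain ⟨r, hr, hneg, rfl⟩ := hr'
        simp
    obtain ⟨b, hb, hbM⟩ := hm r' hr' hbody
    rw [hhead] at hb
    exact (Option.some_inj.mp hb) ▸ hbM

theorem stmt7' (P : Set (Rule α)) (M : Set α) (h : answerSetByCompl P M) :
    answerSetByReduct P M := by
  obtain ⟨hmod, heq⟩ := h
  have hmr : isModel (reduct P M) M := model_reduct hmod
  have hsub : ∀ n, TPiter (reduct P M) M n ⊆ M := iter_sub_M hmr
  have hcsub : ∀ n, TPiter (complProg P) M n ⊆ M := by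
    intro n x hx
    rw [heq]
    exact Set.mem_iUnion.mpr ⟨n, hx⟩
  have key : ∀ n, TPiter (complProg P) M n ⊆ TPiter (reduct P M) M n := by
    intro n
    induction n with
    | zero => simp [TPiter]
    | succ n ih =>
      rintro a ⟨r'', hr'', hhead, hcond⟩
      obtain ⟨r, hr, rfl⟩ := hr''
      have hneg : ∀ A ∈ r.neg, ¬ A.satBy M := by
        intro A hA hsat
        have hc : A.compl.condSatBy (TPiter (complProg P) M n) M :=
          hcond _ (Or.inr ⟨A, hA, rfl⟩)
        have : M ∩ A.dom ∈ A.compl.sol :=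
          hc.2 (M ∩ A.dom) Set.inter_subset_right
            (Set.inter_subset_inter_left _ (hcsub n)) subset_rfl
        exact this.2 hsat
      refine ⟨⟨r.head, r.pos, ∅⟩, ⟨r, hr, hneg, rfl⟩, hhead, ?_⟩
      intro A hA
      exact condSat_mono A (hcond A (Or.inl hA)) ih (hsub n)
  constructor
  · exact hmr
  · apply Set.Subset.antisymm
    · intro x hx
      rw [heq] at hx
      obtain ⟨n, hn⟩ := Set.mem_iUnion.mp hx
      exact Set.mem_iUnion.mpr ⟨n, key n hn⟩
    · intro x hx
      obtain ⟨n, hn⟩ := Set.mem_iUnion.mp hx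
      exact hsub n hn
end Aux

/-- Every answer set by complement of a basic program is an
answer set by reduct. -/
theorem stmt7 (P : Set (Rule α)) (M : Set α) (h : answerSetByCompl P M) :
    answerSetByReduct P M := stmt7' P M h
end

section
/- Let P be a basic naf-monotone program (every c-atom occurring under negation-as-failure in P is monotone). Then M is an answer set by reduct of P if and only if M is an answer set by complement of P. -/
universe u

variable {α : Type u}

lemma compl_condSat_iff (A : CAtom α) (hA : A.IsMonotone) {S M : Set α} (hSM : S ⊆ M) :
    (A.compl).condSatBy S M ↔ ¬ A.satBy M := by
  constructor
  · rintro ⟨_, hcond⟩ hM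
    have := hcond (M ∩ A.dom) Set.inter_subset_right
      (Set.inter_subset_inter hSM subset_rfl) subset_rfl
    exact this.2 hM
  · intro hM
    refine ⟨⟨Set.inter_subset_right,
      fun hs => hM (hA _ _ (Set.inter_subset_inter hSM subset_rfl) Set.inter_subset_right hs)⟩, ?_⟩
    intro I hIdom _ hIM
    exact ⟨hIdom, fun hIsol => hM (hA _ _ hIM Set.inter_subset_right hIsol)⟩

lemma TP_eq (P : Set (Rule α)) (M : Set α) (h : nafMonotone P) {S : Set α} (hSM : S ⊆ M) :
    TP (reduct P M) S M = TP (complProg P) S M := by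
  ext a
  simp only [TP, Set.mem_setOf_eq, reduct, complProg]
  constructor
  · rintro ⟨r', ⟨r, hrP, hneg, rfl⟩, hhead, hpos⟩
    refine ⟨_, ⟨r, hrP, rfl⟩, hhead, ?_⟩
    rintro A (hA | ⟨B, hB, rfl⟩)
    · exact hpos A hA
    · exact (compl_condSat_iff B (h r hrP B hB) hSM).2 (hneg B hB)
  · rintro ⟨r', ⟨r, hrP, rfl⟩, hhead, hall⟩
    refine ⟨_, ⟨r, hrP, ?_, rfl⟩, hhead, fun A hA => hall A (Or.inl hA)⟩
    intro A hA
    exact (compl_condSat_iff A (h r hrP A hA) hSM).1 (hall _ (Or.inr ⟨A, hA, rfl⟩))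

lemma model_iff (P : Set (Rule α)) (M : Set α) :
    isModel (reduct P M) M ↔ isModel (complProg P) M := by
  constructor
  · rintro hm r' ⟨r, hrP, rfl⟩ ⟨hpos, -⟩
    exact hm ⟨r.head, r.pos, ∅⟩ ⟨r, hrP, fun A hA => (hpos _ (Or.inr ⟨A, hA, rfl⟩)).2, rfl⟩
      ⟨fun A hA => hpos A (Or.inl hA), fun A hA => absurd hA (Set.notMem_empty A)⟩
  · rintro hm r' ⟨r, hrP, hneg, rfl⟩ ⟨hpos, -⟩
    refine hm ⟨r.head, r.pos ∪ CAtom.compl '' r.neg, ∅⟩ ⟨r, hrP, rfl⟩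
      ⟨?_, fun A hA => absurd hA (Set.notMem_empty A)⟩
    rintro A (hA | ⟨B, hB, rfl⟩)
    · exact hpos A hA
    · exact ⟨Set.inter_subset_right, hneg B hB⟩

/-- For a basic naf-monotone program, answer sets by reduct and
answer sets by complement coincide. -/
theorem stmt8 (P : Set (Rule α)) (M : Set α) (h : nafMonotone P) :
    answerSetByReduct P M ↔ answerSetByCompl P M := by
  constructor
  · rintro ⟨hmod, hfix⟩
    have hsub : ∀ n, TPiter (reduct P M) M n ⊆ M := by
      intro n
      exact (Set.subset_iUnion (TPiter (reduct P M) M) n).trans hfix.symm.subset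
    have hiter : ∀ n, TPiter (complProg P) M n = TPiter (reduct P M) M n := by
      intro n; induction n with
      | zero => rfl
      | succ n ih =>
        show TP (complProg P) _ M = TP (reduct P M) _ M
        rw [ih, TP_eq P M h (hsub n)]
    have hinf : TPinf (complProg P) M = TPinf (reduct P M) M := Set.iUnion_congr hiter
    exact ⟨(model_iff P M).1 hmod, hinf.symm ▸ hfix⟩
  · rintro ⟨hmod, hfix⟩
    have hsub : ∀ n, TPiter (complProg P) M n ⊆ M := by
      intro n
      exact (Set.subset_iUnion (TPiter (complProg P) M) n).trans hfix.symm.subset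
    have hiter : ∀ n, TPiter (reduct P M) M n = TPiter (complProg P) M n := by
      intro n; induction n with
      | zero => rfl
      | succ n ih =>
        show TP (reduct P M) _ M = TP (complProg P) _ M
        rw [ih, TP_eq P M h (hsub n)]
    have hinf : TPinf (reduct P M) M = TPinf (complProg P) M := Set.iUnion_congr hiter
    exact ⟨(model_iff P M).2 hmod, hinf.symm ▸ hfix⟩
end

section
/- Every answer set by complement of a basic program P is a minimal model of P. -/
universe u

variable {α : Type u}

/-- Every answer set by complement of a basic program `P` is a
minimal model of `P`. -/
theorem stmt10 (P : Set (Rule α)) (M : Set α) (h : answerSetByCompl P M) :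
    isModel P M ∧ ∀ N, isModel P N → N ⊆ M → N = M := by
  obtain ⟨hmod, hfix⟩ := h
  have hcompl_sat : ∀ (A : CAtom α) (S : Set α), A.compl.satBy S ↔ ¬ A.satBy S := by
    intro A S
    constructor
    · intro ⟨_, h2⟩ hs; exact h2 hs
    · intro hs; exact ⟨Set.inter_subset_right, hs⟩
  -- M is a model of P
  have hM : isModel P M := by
    intro r hr hbody
    have := hmod ⟨r.head, r.pos ∪ CAtom.compl '' r.neg, ∅⟩ ⟨r, hr, rfl⟩
    apply this
    constructor
    · intro A hA
      rcases hA with hA | ⟨B, hB, rfl⟩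
      · exact hbody.1 A hA
      · exact (hcompl_sat B M).2 (hbody.2 B hB)
    · intro A hA; exact absurd hA (Set.notMem_empty A)
  refine ⟨hM, ?_⟩
  intro N hN hNM
  refine Set.Subset.antisymm hNM ?_
  -- show M ⊆ N via induction on TPiter
  have key : ∀ i, TPiter (complProg P) M i ⊆ N := by
    intro i
    induction i with
    | zero => exact Set.empty_subset N
    | succ n ih =>
      intro a ha
      obtain ⟨r', ⟨r, hr, rfl⟩, hhead, hcond⟩ := ha
      have hsatN : ∀ A ∈ r.pos ∪ CAtom.compl '' r.neg, A.satBy N := by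
        intro A hA
        obtain ⟨hsatS, hcs⟩ := hcond A hA
        have : N ∩ A.dom ∈ A.sol := by
          apply hcs (N ∩ A.dom) Set.inter_subset_right
          · exact Set.inter_subset_inter_left _ ih
          · exact Set.inter_subset_inter_left _ hNM
        exact this
      have hbodyN : r.bodySat N := by
        constructor
        · intro A hA; exact hsatN A (Or.inl hA)
        · intro A hA
          exact (hcompl_sat A N).1 (hsatN A.compl (Or.inr ⟨A, hA, rfl⟩))
      obtain ⟨b, hb, hbN⟩ := hN r hr hbodyN
      rw [hhead] at hb
      cases hb
      exact hbN
  intro a ha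
  rw [hfix] at ha
  obtain ⟨_, ⟨i, rfl⟩, ha⟩ := ha
  exact key i ha
end

section
/- Every answer set by reduct of a basic program P supports each of its members: for every a ∈ M there is a rule r ∈ P with head (\{a\},\{\{a\}\}) such that M ⊨ body(r). -/
universe u

variable {α : Type u}

/-- Every answer set by reduct of a basic program supports each of its
members: for every `a ∈ M` there is a rule of `P` with head `({a},{{a}})` whose body
is satisfied by `M`. -/
theorem stmt11 (P : Set (Rule α)) (M : Set α) (h : answerSetByReduct P M) :
    ∀ a ∈ M, ∃ r ∈ P, r.head = some a ∧ r.bodySat M := by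
  obtain ⟨hmod, heq⟩ := h
  intro a ha
  have ha' : a ∈ TPinf (reduct P M) M := heq ▸ ha
  obtain ⟨_, ⟨i, rfl⟩, hai⟩ := ha'
  cases i with
  | zero => exact absurd hai (Set.notMem_empty a)
  | succ n =>
    obtain ⟨r', hr', hhead, hpos⟩ := hai
    obtain ⟨r, hrP, hneg, rfl⟩ := hr'
    have hSM : TPiter (reduct P M) M n ⊆ M := by
      have h1 : TPinf (reduct P M) M ⊆ M := le_of_eq heq.symm
      exact (Set.subset_iUnion (TPiter (reduct P M) M) n).trans h1
    refine ⟨r, hrP, hhead, ?_, hneg⟩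
    intro A hA
    obtain ⟨hsat, hcond⟩ := hpos A hA
    exact hcond (M ∩ A.dom) Set.inter_subset_right
      (fun x hx => ⟨hSM hx.1, hx.2⟩) subset_rfl
end

section
/- A set of atoms M is an answer set by reduct of a basic program P if and only if M is a weakly well-supported model of P, where well-supportedness for programs with naf-atoms requires M ⊨ body(r) and the level condition only on the positive body. -/
universe u

variable {α : Type u}

/-- `M` is an answer set by reduct of a basic program `P` iff `M` is a
weakly well-supported model of `P`. -/
theorem stmt14 (P : Set (Rule α)) (M : Set α) :
    answerSetByReduct P M ↔ weaklyWS P M := by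
  constructor
  · rintro ⟨hmod, heq⟩
    have hPM : isModel P M := by
      intro r hr hb
      exact hmod ⟨r.head, r.pos, ∅⟩ ⟨r, hr, hb.2, rfl⟩
        ⟨hb.1, fun A hA => absurd hA (Set.notMem_empty A)⟩
    have hsub : ∀ n, TPiter (reduct P M) M n ⊆ M := by
      intro n a ha
      rw [heq]
      exact Set.mem_iUnion.2 ⟨n, ha⟩
    refine ⟨hPM, fun a => sInf {i | a ∈ TPiter (reduct P M) M i}, ?_, ?_⟩
    · intro a ha
      have hne : {i | a ∈ TPiter (reduct P M) M i}.Nonempty := by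
        have : a ∈ TPinf (reduct P M) M := heq ▸ ha
        obtain ⟨i, hi⟩ := Set.mem_iUnion.1 this
        exact ⟨i, hi⟩
      have hmem := Nat.sInf_mem hne
      rcases Nat.eq_zero_or_pos (sInf {i | a ∈ TPiter (reduct P M) M i}) with h0 | h0
      · rw [h0] at hmem
        exact absurd hmem (Set.notMem_empty a)
      · exact h0
    · intro b hb
      have hne : {i | b ∈ TPiter (reduct P M) M i}.Nonempty := by
        have : b ∈ TPinf (reduct P M) M := heq ▸ hb
        obtain ⟨i, hi⟩ := Set.mem_iUnion.1 this
        exact ⟨i, hi⟩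
      have hmem := Nat.sInf_mem hne
      set lb := sInf {i | b ∈ TPiter (reduct P M) M i} with hlb
      have h0 : lb ≠ 0 := by
        intro h
        rw [h] at hmem
        exact absurd hmem (Set.notMem_empty b)
      obtain ⟨n, hn⟩ := Nat.exists_eq_succ_of_ne_zero h0
      rw [hn] at hmem
      obtain ⟨r', hr', hh, hcond⟩ := hmem
      obtain ⟨r, hrP, hneg, rfl⟩ := hr'
      set S := TPiter (reduct P M) M n with hS
      have hSM : S ⊆ M := hsub n
      refine ⟨r, hrP, hh, ⟨?_, hneg⟩, ?_⟩
      · -- positive body satisfied by M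
        intro A hA
        have hc := hcond A hA
        exact hc.2 (M ∩ A.dom) Set.inter_subset_right
          (Set.inter_subset_inter_left A.dom hSM) subset_rfl
      · intro A hA
        have hc := hcond A hA
        refine ⟨S ∩ A.dom, hc.1, Set.inter_subset_left.trans hSM, ?_, ?_⟩
        · constructor
          · show (S ∩ A.dom) ∩ A.dom ∈ A.sol
            rw [Set.inter_assoc, Set.inter_self]
            exact hc.1
          · intro I hI h1 h2
            refine hc.2 I hI ?_ h2
            calc S ∩ A.dom = (S ∩ A.dom) ∩ A.dom := by
                  rw [Set.inter_assoc, Set.inter_self]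
              _ ⊆ I := h1
        · intro x hx
          have hxS : x ∈ S := hx.1
          have hle : sInf {i | x ∈ TPiter (reduct P M) M i} ≤ n := Nat.sInf_le hxS
          show sInf {i | x ∈ TPiter (reduct P M) M i} <
            sInf {i | b ∈ TPiter (reduct P M) M i}
          rw [← hlb, hn]
          omega
  · rintro ⟨hmod, ℓ, hpos, hsup⟩
    have hsub : ∀ n, TPiter (reduct P M) M n ⊆ M := by
      intro n
      induction n with
      | zero => exact Set.empty_subset M
      | succ n ih =>
        intro a ha
        obtain ⟨r', hr', hh, hcond⟩ := ha
        obtain ⟨r, hrP, hneg, rfl⟩ := hr'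
        have hbody : r.bodySat M := by
          refine ⟨?_, hneg⟩
          intro A hA
          have hc := hcond A hA
          exact hc.2 (M ∩ A.dom) Set.inter_subset_right
            (Set.inter_subset_inter_left A.dom ih) subset_rfl
        obtain ⟨a', ha', haM⟩ := hmod r hrP hbody
        rw [hh] at ha'
        exact (Option.some_injective α ha').symm ▸ haM
    constructor
    · -- isModel of reduct
      rintro r' ⟨r, hrP, hneg, rfl⟩ hb
      exact hmod r hrP ⟨hb.1, hneg⟩
    · -- M = TPinf
      have claim : ∀ n, ∀ b ∈ M, ℓ b ≤ n → b ∈ TPiter (reduct P M) M n := by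
        intro n
        induction n with
        | zero =>
          intro b hb hle
          have := hpos b hb
          omega
        | succ n ih =>
          intro b hb hle
          obtain ⟨r, hrP, hhead, hbody, hsupA⟩ := hsup b hb
          refine ⟨⟨r.head, r.pos, ∅⟩, ⟨r, hrP, hbody.2, rfl⟩, hhead, ?_⟩
          intro A hA
          obtain ⟨X, hXsol, hXM, hXcond, hXlev⟩ := hsupA A hA
          have hXdom : X ⊆ A.dom := A.sol_sub X hXsol
          set S := TPiter (reduct P M) M n with hS
          have hXS : X ⊆ S := by
            intro x hx
            exact ih x (hXM hx) (by have := hXlev x hx; omega)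
          have hXeq : X ∩ A.dom = X := Set.inter_eq_self_of_subset_left hXdom
          have hXSd : X ⊆ S ∩ A.dom := Set.subset_inter hXS hXdom
          constructor
          · show S ∩ A.dom ∈ A.sol
            refine hXcond.2 (S ∩ A.dom) Set.inter_subset_right ?_
              (Set.inter_subset_inter_left A.dom (hsub n))
            rw [hXeq]; exact hXSd
          · intro I hIdom hSI hIM
            refine hXcond.2 I hIdom ?_ hIM
            rw [hXeq]
            exact hXSd.trans hSI
      apply Set.Subset.antisymm
      · intro b hb
        exact Set.mem_iUnion.2 ⟨ℓ b, claim (ℓ b) b hb le_rfl⟩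
      · intro a ha
        obtain ⟨i, hi⟩ := Set.mem_iUnion.1 ha
        exact hsub i hi
end

section
/- For every basic naf-monotone program P, M is a weakly well-supported model of P if and only if M is a strongly well-supported model of P. -/
universe u

variable {α : Type u}

/-- For a basic naf-monotone program, weakly well-supported models and
strongly well-supported models coincide. -/
theorem stmt15 (P : Set (Rule α)) (M : Set α) (h : nafMonotone P) :
    weaklyWS P M ↔ stronglyWS P M := by
  constructor
  · rintro ⟨hM, ℓ, hpos, hws⟩
    refine ⟨hM, ℓ, hpos, fun b hb => ?_⟩
    obtain ⟨r, hr, hhead, hbody, hlev⟩ := hws b hb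
    refine ⟨r, hr, hhead, hbody, hlev, fun A hA => ?_⟩
    have hmono := h r hr A hA
    have hnsat : ¬ A.satBy M := hbody.2 A hA
    have hempty : (∅ : Set α) ∉ A.sol := fun he =>
      hnsat (hmono ∅ (M ∩ A.dom) (Set.empty_subset _) Set.inter_subset_right he)
    refine ⟨∅, ⟨Set.empty_subset _, hempty⟩, Set.empty_subset _, ?_, by simp⟩
    constructor
    · show (∅ : Set α) ∩ A.dom ∈ _
      simpa using ⟨Set.empty_subset _, hempty⟩
    · intro I hI _ hIM
      refine ⟨hI, fun hIsol => hnsat (hmono I (M ∩ A.dom) hIM Set.inter_subset_right hIsol)⟩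
  · rintro ⟨hM, ℓ, hpos, hws⟩
    refine ⟨hM, ℓ, hpos, fun b hb => ?_⟩
    obtain ⟨r, hr, hhead, hbody, hlev, _⟩ := hws b hb
    exact ⟨r, hr, hhead, hbody, hlev⟩
end

section
/- Let P be a monotone positive program (all c-atoms monotone, heads possibly non-elementary). If M is an answer set of P (M is a model of P and M is an answer set of the instance inst(P,M)), then the sequence M_i = T_{inst(P,M)}^i(∅,M) is a P-computation in the sense of Marek and Truszczyński whose result is M; consequently M is a stable model of P in their sense. -/
universe u

variable {α : Type u}

/-- For a monotone general positive program `P`, if `M` is a model of `P`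
and an answer set of `inst(P,M)`, then the sequence `Mᵢ = T_{inst(P,M)}^i(∅,M)` is a
`P`-computation whose result is `M`; consequently `M` is a Marek–Truszczyński
stable model of `P`. -/
theorem stmt16 (P : Set (GRule α)) (M : Set α)
    (hmono : ∀ r ∈ P, r.head.IsMonotone ∧ ∀ A ∈ r.pos, A.IsMonotone)
    (hmod : isGModel P M) (has : answerSetPos (inst P M) M) :
    ((∀ n, TPiter (inst P M) M n ⊆ TPiter (inst P M) M (n + 1)) ∧
     (∀ n, TPiter (inst P M) M (n + 1) ∈ Tnd P (TPiter (inst P M) M n)) ∧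
     (⋃ n, TPiter (inst P M) M n) = M) ∧
    mtStable P M := by
  obtain ⟨hmodQ, hM⟩ := has
  have hsubM : ∀ n, TPiter (inst P M) M n ⊆ M :=
    fun n => le_trans (Set.subset_iUnion (TPiter (inst P M) M) n) hM.ge
  have hcond : ∀ (A : CAtom α) (S S' : Set α), S ⊆ S' → S' ⊆ M →
      A.condSatBy S M → A.condSatBy S' M := by
    rintro A S S' hSS' hS'M ⟨hsat, hI⟩
    refine ⟨hI (S' ∩ A.dom) Set.inter_subset_right
      (Set.inter_subset_inter_left _ hSS') (Set.inter_subset_inter_left _ hS'M),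
      fun I hId hS'I hIM => hI I hId ((Set.inter_subset_inter_left _ hSS').trans hS'I) hIM⟩
  have hchain : ∀ n, TPiter (inst P M) M n ⊆ TPiter (inst P M) M (n + 1) := by
    intro n
    induction n with
    | zero => exact Set.empty_subset _
    | succ k ih =>
      rintro a ⟨r, hr, hhd, hA⟩
      exact ⟨r, hr, hhd, fun A hAp =>
        hcond A _ _ ih (hsubM (k+1)) (hA A hAp)⟩
  have hstep : ∀ n, TPiter (inst P M) M (n + 1) ∈ Tnd P (TPiter (inst P M) M n) := by
    intro n
    constructor
    · rintro a ⟨r', hr'Q, hhd, hA⟩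
      obtain ⟨r, hrP, hsol, b, hb, heq⟩ := hr'Q
      subst heq
      simp only [Option.some.injEq] at hhd
      subst hhd
      have hrappl : r ∈ appl P (TPiter (inst P M) M n) :=
        ⟨hrP, fun A hAp => (hA A hAp).1⟩
      exact Set.mem_iUnion₂.2 ⟨r, hrappl, hb.2⟩
    · rintro r ⟨hrP, hbody⟩
      -- body satisfied by M via monotonicity
      have hbodyM : ∀ A ∈ r.pos, A.satBy M := fun A hAp =>
        (hmono r hrP).2 A hAp _ _ (Set.inter_subset_inter_left _ (hsubM n))
          Set.inter_subset_right (hbody A hAp)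
      have hheadM : r.head.satBy M := hmod r hrP hbodyM
      -- every b ∈ M ∩ head.dom is in TPiter (n+1)
      have hsub : M ∩ r.head.dom ⊆ TPiter (inst P M) M (n + 1) := by
        intro b hb
        refine ⟨⟨some b, r.pos, ∅⟩, ⟨r, hrP, hheadM, b, hb, rfl⟩, rfl, ?_⟩
        intro A hAp
        exact ⟨hbody A hAp, fun I hId hSI _ =>
          (hmono r hrP).2 A hAp _ I hSI hId (hbody A hAp)⟩
      have heq2 : TPiter (inst P M) M (n + 1) ∩ r.head.dom = M ∩ r.head.dom := by
        apply Set.Subset.antisymm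
        · exact Set.inter_subset_inter_left _ (hsubM (n+1))
        · intro b hb
          exact ⟨hsub hb, hb.2⟩
      show TPiter (inst P M) M (n + 1) ∩ r.head.dom ∈ r.head.sol
      rw [heq2]
      exact hheadM
  refine ⟨⟨hchain, hstep, hM.symm⟩, ⟨TPiter (inst P M) M, rfl, hchain, hstep, hM⟩⟩
end

section
/- For interpretations I ⊆ M and a c-atom A, I conditionally satisfies A with respect to M (I ⊨_M A) if and only if the pair ⟨I ∩ M ∩ A_d, A_d \ M⟩ is a solution of A, i.e., for every J ⊆ 𝒜 with I ∩ M ∩ A_d ⊆ J and J ∩ (A_d \ M) = ∅, J ⊨ A. -/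
universe u

variable {α : Type u}

/-- For `I ⊆ M`, `I ⊨_M A` iff `⟨I ∩ M ∩ A_d, A_d \ M⟩` is a solution
of `A`, i.e., every `J` with `I ∩ M ∩ A_d ⊆ J` and `J ∩ (A_d \ M) = ∅` satisfies `A`. -/
theorem stmt19 (A : CAtom α) (I M : Set α) (h : I ⊆ M) :
    A.condSatBy I M ↔
      ∀ J : Set α, I ∩ M ∩ A.dom ⊆ J → J ∩ (A.dom \ M) = ∅ → A.satBy J := by
  constructor
  · rintro ⟨hs, hc⟩ J hJ1 hJ2
    have hsub : J ∩ A.dom ⊆ M ∩ A.dom := by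
      intro x hx
      refine ⟨?_, hx.2⟩
      by_contra hm
      exact absurd (Set.eq_empty_iff_forall_notMem.mp hJ2 x ⟨hx.1, hx.2, hm⟩) (fun h => h)
    have : J ∩ A.dom ∈ A.sol := by
      apply hc (J ∩ A.dom) (Set.inter_subset_right)
      · intro x hx
        exact ⟨hJ1 ⟨⟨hx.1, h hx.1⟩, hx.2⟩, hx.2⟩
      · exact hsub
    exact this
  · intro hall
    constructor
    · apply hall I (fun x hx => hx.1.1)
      ext x; simp only [Set.mem_inter_iff, Set.mem_diff, Set.mem_empty_iff_false, iff_false]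
      rintro ⟨hxI, _, hxM⟩; exact hxM (h hxI)
    · intro I' hI'd hII' hI'M
      have := hall I' (fun x hx => hII' ⟨hx.1.1, hx.2⟩) (by
        ext x; simp only [Set.mem_inter_iff, Set.mem_diff, Set.mem_empty_iff_false, iff_false]
        rintro ⟨hxI', _, hxM⟩; exact hxM (hI'M hxI').1)
      have heq : I' ∩ A.dom = I' := Set.inter_eq_left.mpr hI'd
      rwa [CAtom.satBy, heq] at this
end
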